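/- Let p : Fin 4 → ℝ² be a quadrilateral in general position. Then exactly one of the following three configurations holds: (i) the open diagonals intersect (openSegment ℝ (p 0) (p 2) ∩ openSegment ℝ (p 1) (p 3) ≠ ∅); (ii) some point p_i lies in the interior of the convex hull of the other three points; (iii) a pair of opposite open edges intersects (openSegment ℝ (p 0) (p 1) ∩ openSegment ℝ (p 2) (p 3) ≠ ∅ or openSegment ℝ (p 1) (p 2) ∩ openSegment ℝ (p 3) (p 0) ≠ ∅). -/

import Mathlib

/-!
With `[i j k] = cross (p i) (p j) (p k)`, the numbers `λ i = radonCoeff p i`, which are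
`(-1) ^ i [triangle without p i]`, are the coefficients of the affine dependence
`∑ λ i • p i = 0`, `∑ λ i = 0` of the four points, and general position makes them all nonzero.
The straddle test for the diagonals and the opposite edges, and barycentric coordinates for the
triangles, turn each configuration into a sign pattern of `λ` (its Radon partition): the
diagonals cross iff the signs split as `{0, 2} | {1, 3}`, a pair of opposite edges crosses iff
they split as `{0, 1} | {2, 3}` or `{1, 2} | {3, 0}`, and `p i` lies inside the triangle of the
others iff `λ i` is the only one of its sign. As `∑ λ i = 0`, the signs are not all equal, so
exactly one of these patterns occurs.
-/

/-- The cross value of three points in the plane: the z-coordinate of the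
cross product `(b - a) × (c - b)`. -/
noncomputable def cross (a b c : ℝ × ℝ) : ℝ :=
  (b.1 - a.1) * (c.2 - b.2) - (b.2 - a.2) * (c.1 - b.1)

/-- A quadrilateral `p : Fin 4 → ℝ²` is in general position if no three of its
four points are collinear. -/
def GeneralPosition (p : Fin 4 → ℝ × ℝ) : Prop :=
  ∀ i j k : Fin 4, i ≠ j → i ≠ k → j ≠ k → cross (p i) (p j) (p k) ≠ 0

/-- The Q-value of a quadrilateral: `|∑ i, sgn (cross (p (i-1)) (p i) (p (i+1)))|`. -/
noncomputable def Qvalue (p : Fin 4 → ℝ × ℝ) : ℝ :=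
  |∑ i : Fin 4, Real.sign (cross (p (i - 1)) (p i) (p (i + 1)))|

section Cross

variable (a b c d : ℝ × ℝ)

theorem cross_rotate : cross b c a = cross a b c := by unfold cross; ring
theorem cross_swap_left : cross b a c = -cross a b c := by unfold cross; ring
theorem cross_swap_right : cross a c b = -cross a b c := by unfold cross; ring

theorem cross_smul_add_smul {s t : ℝ} (h : s + t = 1) :
    cross a b (s • c + t • d) = s * cross a b c + t * cross a b d := by
  obtain rfl : t = 1 - s := by linarith
  simp only [cross, Prod.smul_fst, Prod.smul_snd, Prod.fst_add, Prod.snd_add, smul_eq_mul]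
  ring

variable {a b c d}

theorem cross_eq_zero_of_mem_openSegment {x : ℝ × ℝ} (hx : x ∈ openSegment ℝ a b) :
    cross a b x = 0 := by
  obtain ⟨s, t, -, -, hst, rfl⟩ := hx
  rw [cross_smul_add_smul a b a b hst]
  simp only [cross]
  ring

end Cross

theorem mul_neg_of_mul_add_mul_eq_zero {u v C D : ℝ} (hu : 0 < u) (hv : 0 < v) (hC : C ≠ 0)
    (h : u * C + v * D = 0) : C * D < 0 := by
  have : v * (C * D) < 0 := by
    rw [show v * (C * D) = -(u * C ^ 2) by linear_combination C * h]
    exact neg_neg_of_pos (by positivity)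
  exact neg_of_mul_neg_right this hv.le

theorem sub_ne_zero_of_mul_neg {P Q : ℝ} (h : P * Q < 0) : Q - P ≠ 0 := by
  intro h'
  obtain rfl : Q = P := by linarith
  nlinarith [mul_self_nonneg Q]

theorem mem_openSegment_of_mul_neg {E : Type*} [AddCommGroup E] [Module ℝ E] (x y : E) {P Q : ℝ}
    (h : P * Q < 0) :
    (Q - P)⁻¹ • (Q • x - P • y) ∈ openSegment ℝ x y := by
  have hQP := sub_ne_zero_of_mul_neg h
  have hsum : Q / (Q - P) + -P / (Q - P) = 1 := by
    rw [← add_div, div_eq_one_iff_eq hQP]; ring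
  have hpos : 0 < Q / (Q - P) ∧ 0 < -P / (Q - P) := by
    rcases mul_neg_iff.mp h with ⟨hP, hQ⟩ | ⟨hP, hQ⟩
    · exact ⟨div_pos_of_neg_of_neg hQ (by linarith),
        div_pos_of_neg_of_neg (by linarith) (by linarith)⟩
    · exact ⟨div_pos hQ (by linarith), div_pos (by linarith) (by linarith)⟩
  refine ⟨_, _, hpos.1, hpos.2, hsum, ?_⟩
  rw [div_eq_inv_mul, div_eq_inv_mul, mul_smul, mul_smul, neg_smul, ← smul_add, ← sub_eq_add_neg]

theorem openSegment_inter_openSegment_nonempty_iff {a b c d : ℝ × ℝ}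
    (habc : cross a b c ≠ 0) (hcda : cross c d a ≠ 0) :
    (openSegment ℝ a b ∩ openSegment ℝ c d).Nonempty ↔
      cross a b c * cross a b d < 0 ∧ cross c d a * cross c d b < 0 := by
  constructor
  · rintro ⟨x, hab, hcd⟩
    obtain ⟨s, t, hs, ht, hst, rfl⟩ := id hab
    obtain ⟨u, v, hu, hv, huv, hx⟩ := hcd
    refine ⟨mul_neg_of_mul_add_mul_eq_zero hu hv habc ?_,
      mul_neg_of_mul_add_mul_eq_zero hs ht hcda ?_⟩
    · rw [← cross_smul_add_smul a b c d huv, hx, cross_eq_zero_of_mem_openSegment hab]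
    · rw [← cross_smul_add_smul c d a b hst, ← hx,
        cross_eq_zero_of_mem_openSegment ⟨u, v, hu, hv, huv, rfl⟩]
  · rintro ⟨hab, hcd⟩
    refine ⟨_, ?_, mem_openSegment_of_mul_neg c d hab⟩
    convert mem_openSegment_of_mul_neg a b hcd using 1
    -- both points are the intersection of the lines `ab` and `cd`
    have key : (cross c d b - cross c d a) • (cross a b d • c - cross a b c • d) =
        (cross a b d - cross a b c) • (cross c d b • a - cross c d a • b) := by
      ext <;> simp only [cross, Prod.smul_fst, Prod.smul_snd, Prod.fst_sub, Prod.snd_sub,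
        smul_eq_mul] <;> ring
    rw [inv_smul_eq_iff₀ (sub_ne_zero_of_mul_neg hab), smul_comm,
      eq_inv_smul_iff₀ (sub_ne_zero_of_mul_neg hcd), key]

theorem cross_barycentric (a b c : ℝ × ℝ) {α β γ : ℝ} (h : α + β + γ = 1) :
    cross (α • a + β • b + γ • c) b c = α * cross a b c ∧
      cross a (α • a + β • b + γ • c) c = β * cross a b c ∧
      cross a b (α • a + β • b + γ • c) = γ * cross a b c := by
  obtain rfl : γ = 1 - α - β := by linarith
  simp only [cross, Prod.smul_fst, Prod.smul_snd, Prod.fst_add, Prod.snd_add, smul_eq_mul]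
  refine ⟨?_, ?_, ?_⟩ <;> ring

theorem affineIndependent_of_cross_ne_zero {a b c : ℝ × ℝ} (h : cross a b c ≠ 0) :
    AffineIndependent ℝ ![a, b, c] := by
  rw [affineIndependent_iff_not_collinear]
  intro hcol
  obtain ⟨v, hv⟩ := (collinear_iff_of_mem (show a ∈ Set.range ![a, b, c] from ⟨0, rfl⟩)).mp hcol
  obtain ⟨r, rfl⟩ := hv b ⟨1, rfl⟩
  obtain ⟨s, rfl⟩ := hv c ⟨2, rfl⟩
  apply h
  simp only [cross, vadd_eq_add, Prod.fst_add, Prod.snd_add, Prod.smul_fst, Prod.smul_snd,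
    smul_eq_mul]
  ring

theorem mem_interior_convexHull_triangle_iff {a b c x : ℝ × ℝ} (h : cross a b c ≠ 0) :
    x ∈ interior (convexHull ℝ {a, b, c}) ↔
      0 < cross x b c * cross a b c ∧ 0 < cross a x c * cross a b c ∧
        0 < cross a b x * cross a b c := by
  have hind := affineIndependent_of_cross_ne_zero h
  let T : AffineBasis (Fin 3) ℝ (ℝ × ℝ) := ⟨![a, b, c], hind, by
    rw [hind.affineSpan_eq_top_iff_card_eq_finrank_add_one]; simp⟩
  have hT : Set.range T = {a, b, c} := by
    change Set.range ![a, b, c] = _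
    rw [Matrix.range_cons, Matrix.range_cons, Matrix.range_cons_empty, Set.singleton_union,
      Set.singleton_union]
  have hsum : T.coord 0 x + T.coord 1 x + T.coord 2 x = 1 := by
    rw [← T.sum_coord_apply_eq_one x, Fin.sum_univ_three]
  have hx : T.coord 0 x • a + T.coord 1 x • b + T.coord 2 x • c = x := by
    have := T.linear_combination_coord_eq_self x
    rwa [Fin.sum_univ_three] at this
  obtain ⟨h₀, h₁, h₂⟩ := cross_barycentric a b c hsum
  rw [hx] at h₀ h₁ h₂
  have hsq : 0 < cross a b c * cross a b c := mul_self_pos.mpr h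
  rw [← hT, T.interior_convexHull, Set.mem_ofPred_eq, Fin.forall_fin_succ, Fin.forall_fin_two,
    h₀, h₁, h₂]
  simp only [mul_assoc, mul_pos_iff_of_pos_right hsq]
  rfl

def ExactlyOneOf (X Y Z : Prop) : Prop := X ∧ ¬Y ∧ ¬Z ∨ ¬X ∧ Y ∧ ¬Z ∨ ¬X ∧ ¬Y ∧ Z

theorem exactlyOneOf_signs_of_sum_eq_zero {w : Fin 4 → ℝ} (hw : ∀ i, w i ≠ 0)
    (hsum : ∑ i, w i = 0) :
    ExactlyOneOf (0 < w 0 * w 2 ∧ 0 < w 1 * w 3) (∃ i, ∀ j ≠ i, w i * w j < 0)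
      ((0 < w 0 * w 1 ∧ 0 < w 2 * w 3) ∨ (0 < w 1 * w 2 ∧ 0 < w 3 * w 0)) := by
  rw [Fin.sum_univ_four] at hsum
  unfold ExactlyOneOf
  simp only [Fin.exists_fin_succ, Fin.forall_fin_succ, IsEmpty.exists_iff, IsEmpty.forall_iff]
  -- `hsum` excludes the two constant sign patterns; each of the other fourteen meets exactly one
  -- of the three conditions
  rcases (hw 0).lt_or_gt with h0 | h0 <;> rcases (hw 1).lt_or_gt with h1 | h1 <;>
    rcases (hw 2).lt_or_gt with h2 | h2 <;> rcases (hw 3).lt_or_gt with h3 | h3 <;>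
    first
    | (exfalso; linarith)
    | simp [mul_pos_iff, mul_neg_iff, h0, h1, h2, h3, h0.not_gt, h1.not_gt, h2.not_gt, h3.not_gt]

noncomputable def radonCoeff (p : Fin 4 → ℝ × ℝ) : Fin 4 → ℝ :=
  ![cross (p 1) (p 2) (p 3), -cross (p 0) (p 2) (p 3), cross (p 0) (p 1) (p 3),
    -cross (p 0) (p 1) (p 2)]

theorem sum_radonCoeff (p : Fin 4 → ℝ × ℝ) : ∑ i, radonCoeff p i = 0 := by
  simp only [Fin.sum_univ_four, radonCoeff, Matrix.cons_val_zero, Matrix.cons_val_one,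
    Matrix.cons_val, cross]
  ring

theorem image_setOf_ne_eq {α : Type*} (p : Fin 4 → α) (i j k l : Fin 4)
    (h : ∀ m, m ≠ i ↔ m = j ∨ m = k ∨ m = l := by decide) :
    p '' {m | m ≠ i} = {p j, p k, p l} := by
  ext x
  simp [h, eq_comm]

namespace GeneralPosition

variable {p : Fin 4 → ℝ × ℝ}

theorem cross_ne_zero (hp : GeneralPosition p) (i j k : Fin 4)
    (h : i ≠ j ∧ i ≠ k ∧ j ≠ k := by decide) :
    cross (p i) (p j) (p k) ≠ 0 :=
  hp i j k h.1 h.2.1 h.2.2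

theorem radonCoeff_ne_zero (hp : GeneralPosition p) (i : Fin 4) : radonCoeff p i ≠ 0 := by
  fin_cases i
  exacts [hp.cross_ne_zero 1 2 3, neg_ne_zero.mpr (hp.cross_ne_zero 0 2 3),
    hp.cross_ne_zero 0 1 3, neg_ne_zero.mpr (hp.cross_ne_zero 0 1 2)]

theorem diagonals_inter_ne_empty_iff (hp : GeneralPosition p) :
    openSegment ℝ (p 0) (p 2) ∩ openSegment ℝ (p 1) (p 3) ≠ ∅ ↔
      0 < radonCoeff p 0 * radonCoeff p 2 ∧ 0 < radonCoeff p 1 * radonCoeff p 3 := by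
  rw [← Set.nonempty_iff_ne_empty,
    openSegment_inter_openSegment_nonempty_iff (hp.cross_ne_zero 0 2 1) (hp.cross_ne_zero 1 3 0),
    cross_swap_right (p 0), cross_rotate (p 0), cross_swap_right (p 1)]
  simp [radonCoeff, mul_comm, neg_mul, mul_neg, and_comm]

theorem oppositeEdges_inter_ne_empty_iff (hp : GeneralPosition p) :
    openSegment ℝ (p 0) (p 1) ∩ openSegment ℝ (p 2) (p 3) ≠ ∅ ∨
        openSegment ℝ (p 1) (p 2) ∩ openSegment ℝ (p 3) (p 0) ≠ ∅ ↔
      (0 < radonCoeff p 0 * radonCoeff p 1 ∧ 0 < radonCoeff p 2 * radonCoeff p 3) ∨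
        (0 < radonCoeff p 1 * radonCoeff p 2 ∧ 0 < radonCoeff p 3 * radonCoeff p 0) := by
  rw [← Set.nonempty_iff_ne_empty, ← Set.nonempty_iff_ne_empty,
    openSegment_inter_openSegment_nonempty_iff (hp.cross_ne_zero 0 1 2) (hp.cross_ne_zero 2 3 0),
    openSegment_inter_openSegment_nonempty_iff (hp.cross_ne_zero 1 2 3) (hp.cross_ne_zero 3 0 1),
    cross_rotate (p 0) (p 2), cross_rotate (p 1) (p 2), cross_rotate (p 0) (p 1) (p 2),
    ← cross_rotate (p 3) (p 0) (p 1), ← cross_rotate (p 3) (p 0) (p 2)]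
  simp [radonCoeff, mul_comm, neg_mul, mul_neg, and_comm]

theorem exists_mem_interior_iff (hp : GeneralPosition p) :
    (∃ i, p i ∈ interior (convexHull ℝ (p '' {j | j ≠ i}))) ↔
      ∃ i, ∀ j ≠ i, radonCoeff p i * radonCoeff p j < 0 := by
  refine exists_congr fun i => ?_
  obtain rfl | rfl | rfl | rfl : i = 0 ∨ i = 1 ∨ i = 2 ∨ i = 3 := by revert i; decide
  · rw [image_setOf_ne_eq p 0 1 2 3, mem_interior_convexHull_triangle_iff (hp.cross_ne_zero 1 2 3),
      cross_swap_left (p 0), cross_rotate (p 0) (p 1) (p 2)]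
    simp [Fin.forall_fin_succ, radonCoeff, mul_comm, neg_mul, mul_neg, and_comm]
  · rw [image_setOf_ne_eq p 1 0 2 3, mem_interior_convexHull_triangle_iff (hp.cross_ne_zero 0 2 3),
      cross_swap_right (p 0) (p 1) (p 2)]
    simp [Fin.forall_fin_succ, radonCoeff, mul_comm, neg_mul, mul_neg, and_comm, and_left_comm]
  · rw [image_setOf_ne_eq p 2 0 1 3, mem_interior_convexHull_triangle_iff (hp.cross_ne_zero 0 1 3),
      cross_swap_left (p 1) (p 2) (p 3)]
    simp [Fin.forall_fin_succ, radonCoeff, mul_comm, neg_mul, mul_neg, and_comm]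
  · rw [image_setOf_ne_eq p 3 0 1 2, mem_interior_convexHull_triangle_iff (hp.cross_ne_zero 0 1 2),
      ← cross_rotate (p 3) (p 1) (p 2), cross_swap_right (p 0) (p 2) (p 3)]
    simp [Fin.forall_fin_succ, radonCoeff, mul_comm, neg_mul, mul_neg, and_comm, and_left_comm]

end GeneralPosition

theorem quadrilateral_trichotomy (p : Fin 4 → ℝ × ℝ)
    (hp : GeneralPosition p) :
    (openSegment ℝ (p 0) (p 2) ∩ openSegment ℝ (p 1) (p 3) ≠ ∅ ∧
      ¬ (∃ i : Fin 4, p i ∈ interior (convexHull ℝ (p '' {j | j ≠ i}))) ∧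
      ¬ (openSegment ℝ (p 0) (p 1) ∩ openSegment ℝ (p 2) (p 3) ≠ ∅ ∨
         openSegment ℝ (p 1) (p 2) ∩ openSegment ℝ (p 3) (p 0) ≠ ∅)) ∨
    (¬ (openSegment ℝ (p 0) (p 2) ∩ openSegment ℝ (p 1) (p 3) ≠ ∅) ∧
      (∃ i : Fin 4, p i ∈ interior (convexHull ℝ (p '' {j | j ≠ i}))) ∧
      ¬ (openSegment ℝ (p 0) (p 1) ∩ openSegment ℝ (p 2) (p 3) ≠ ∅ ∨
         openSegment ℝ (p 1) (p 2) ∩ openSegment ℝ (p 3) (p 0) ≠ ∅)) ∨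
    (¬ (openSegment ℝ (p 0) (p 2) ∩ openSegment ℝ (p 1) (p 3) ≠ ∅) ∧
      ¬ (∃ i : Fin 4, p i ∈ interior (convexHull ℝ (p '' {j | j ≠ i}))) ∧
      (openSegment ℝ (p 0) (p 1) ∩ openSegment ℝ (p 2) (p 3) ≠ ∅ ∨
       openSegment ℝ (p 1) (p 2) ∩ openSegment ℝ (p 3) (p 0) ≠ ∅)) := by
  rw [hp.diagonals_inter_ne_empty_iff, hp.exists_mem_interior_iff,
    hp.oppositeEdges_inter_ne_empty_iff]
  exact exactlyOneOf_signs_of_sum_eq_zero hp.radonCoeff_ne_zero (sum_radonCoeff p)
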